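/- Let $\bar{X}, X \in \mathbb{R}^{t \times d}$, $\varepsilon \in \mathbb{R}^t$, $\theta^* \in \mathbb{R}^d$, $\rho > 0$, and set $y = \bar{X}\theta^* + \varepsilon$, $\Omega = \rho I + X^\top X$, $\hat{\theta} = \Omega^{-1}X^\top y$. Then $\|\hat{\theta} - \theta^*\|_{\Omega} \;\leq\; \|X^\top \varepsilon\|_{\Omega^{-1}} + \|\theta^*\|_2\,\|X - \bar{X}\| + \sqrt{\rho}\,\|\theta^*\|_2$. -/

import Mathlib

/-!
Since `Ω (θ̂ - θ*) = Xᵀε - Xᵀ(X - X̄)θ* - ρθ*` and `‖θ̂ - θ*‖_Ω = ‖Ω (θ̂ - θ*)‖_{Ω⁻¹}`,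
the triangle inequality for `‖·‖_{Ω⁻¹}` reduces the claim to `‖Xᵀu‖_{Ω⁻¹} ≤ ‖u‖` and
`‖ρθ‖_{Ω⁻¹} ≤ √ρ ‖θ‖`. Both follow by duality (`‖v‖_{Ω⁻¹} ≤ C` as soon as
`v ⬝ w ≤ C ‖w‖_Ω` for all `w`) from `‖w‖_Ω² = ρ ‖w‖² + ‖Xw‖²`, which gives
`‖Xw‖ ≤ ‖w‖_Ω` and `√ρ ‖w‖ ≤ ‖w‖_Ω`.
-/

open Matrix

/-- Spectral (operator) norm of a real matrix, viewed as the operator norm of the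
induced linear map between Euclidean spaces. -/
noncomputable def opNorm {n m : ℕ} (A : Matrix (Fin n) (Fin m) ℝ) : ℝ :=
  ‖LinearMap.toContinuousLinearMap (Matrix.toEuclideanLin A)‖

/-- Euclidean norm of a vector. -/
noncomputable def vecNorm {d : ℕ} (a : Fin d → ℝ) : ℝ := Real.sqrt (a ⬝ᵥ a)

/-- Weighted norm `‖a‖_Ω = sqrt (aᵀ Ω a)`. -/
noncomputable def wnorm {r : ℕ} (Ω : Matrix (Fin r) (Fin r) ℝ) (a : Fin r → ℝ) : ℝ :=
  Real.sqrt (a ⬝ᵥ (Ω *ᵥ a))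

/-- `k`-th largest singular value of a matrix, characterized as the distance (in the
spectral norm) to the set of matrices of rank `< k` (approximation numbers). -/
noncomputable def singVal {n m : ℕ} (k : ℕ) (A : Matrix (Fin n) (Fin m) ℝ) : ℝ :=
  sInf {c | ∃ B : Matrix (Fin n) (Fin m) ℝ, B.rank < k ∧ c = opNorm (A - B)}

lemma dotProduct_self_nonneg {n : ℕ} (a : Fin n → ℝ) : 0 ≤ a ⬝ᵥ a := by
  simpa using dotProduct_star_self_nonneg a

lemma vecNorm_eq_norm_toLp {n : ℕ} (a : Fin n → ℝ) : vecNorm a = ‖WithLp.toLp 2 a‖ := by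
  rw [EuclideanSpace.norm_eq, vecNorm, dotProduct]
  simp [sq]

lemma dotProduct_le_vecNorm_mul_vecNorm {n : ℕ} (a b : Fin n → ℝ) :
    a ⬝ᵥ b ≤ vecNorm a * vecNorm b := by
  rw [vecNorm_eq_norm_toLp, vecNorm_eq_norm_toLp, dotProduct_comm]
  exact real_inner_le_norm (WithLp.toLp 2 a) (WithLp.toLp 2 b)

lemma vecNorm_mulVec_le {n m : ℕ} (A : Matrix (Fin n) (Fin m) ℝ) (x : Fin m → ℝ) :
    vecNorm (A *ᵥ x) ≤ opNorm A * vecNorm x := by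
  rw [vecNorm_eq_norm_toLp, vecNorm_eq_norm_toLp]
  exact (LinearMap.toContinuousLinearMap (Matrix.toEuclideanLin A)).le_opNorm (WithLp.toLp 2 x)

lemma wnorm_eq_norm {r : ℕ} {M : Matrix (Fin r) (Fin r) ℝ} (hM : M.PosSemidef)
    (a : Fin r → ℝ) :
    wnorm M a = @Norm.norm _ (M.toSeminormedAddCommGroup hM).toNorm a := by
  rw [wnorm, dotProduct_comm]
  rfl

lemma wnorm_sub_le {r : ℕ} {M : Matrix (Fin r) (Fin r) ℝ} (hM : M.PosSemidef)
    (a b : Fin r → ℝ) :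
    wnorm M (a - b) ≤ wnorm M a + wnorm M b := by
  simp only [wnorm_eq_norm hM]
  exact @norm_sub_le _ (M.toSeminormedAddCommGroup hM).toSeminormedAddGroup a b

lemma wnorm_inv_mulVec {r : ℕ} {M : Matrix (Fin r) (Fin r) ℝ} (hM : IsUnit M.det)
    (a : Fin r → ℝ) :
    wnorm M⁻¹ (M *ᵥ a) = wnorm M a := by
  rw [wnorm, mulVec_mulVec, nonsing_inv_mul M hM, one_mulVec, dotProduct_comm, wnorm]

lemma wnorm_inv_le_of_forall_dotProduct_le {r : ℕ} {M : Matrix (Fin r) (Fin r) ℝ}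
    (hM : M.PosDef) {v : Fin r → ℝ} {C : ℝ} (hC : 0 ≤ C) (h : ∀ w, v ⬝ᵥ w ≤ C * wnorm M w) :
    wnorm M⁻¹ v ≤ C := by
  have hdet : IsUnit M.det := (isUnit_iff_isUnit_det M).mp hM.isUnit
  -- the test vector `w = M⁻¹ v` satisfies `v ⬝ᵥ w = ‖w‖_M² = ‖v‖_{M⁻¹}²`
  set w := M⁻¹ *ᵥ v
  have hv : M *ᵥ w = v := by rw [mulVec_mulVec, mul_nonsing_inv M hdet, one_mulVec]
  have hsq : wnorm M w ^ 2 = v ⬝ᵥ w := by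
    rw [wnorm, Real.sq_sqrt (by simpa using hM.posSemidef.dotProduct_mulVec_nonneg w), hv,
      dotProduct_comm]
  have hnonneg : 0 ≤ wnorm M w := Real.sqrt_nonneg _
  rw [← hv, wnorm_inv_mulVec hdet]
  nlinarith [h w]

section Ridge

variable {t d : ℕ} (X : Matrix (Fin t) (Fin d) ℝ) {ρ : ℝ}

lemma posDef_smul_one_add_transpose_mul_self (hρ : 0 < ρ) :
    (ρ • (1 : Matrix (Fin d) (Fin d) ℝ) + Xᵀ * X).PosDef := by
  rw [smul_one_eq_diagonal]
  exact (posDef_diagonal_iff.mpr fun _ => hρ).add_posSemidef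
    (by simpa using posSemidef_conjTranspose_mul_self X)

lemma dotProduct_smul_one_add_transpose_mul_self_mulVec (w : Fin d → ℝ) :
    w ⬝ᵥ ((ρ • 1 + Xᵀ * X) *ᵥ w) = ρ * (w ⬝ᵥ w) + (X *ᵥ w) ⬝ᵥ (X *ᵥ w) := by
  rw [add_mulVec, dotProduct_add, smul_mulVec, one_mulVec, dotProduct_smul, ← mulVec_mulVec,
    dotProduct_mulVec, vecMul_transpose, smul_eq_mul, dotProduct_comm w]

lemma vecNorm_mulVec_le_wnorm (hρ : 0 ≤ ρ) (w : Fin d → ℝ) :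
    vecNorm (X *ᵥ w) ≤ wnorm (ρ • 1 + Xᵀ * X) w := by
  rw [wnorm, dotProduct_smul_one_add_transpose_mul_self_mulVec, vecNorm]
  exact Real.sqrt_le_sqrt (le_add_of_nonneg_left (mul_nonneg hρ (dotProduct_self_nonneg w)))

lemma sqrt_mul_vecNorm_le_wnorm (hρ : 0 ≤ ρ) (w : Fin d → ℝ) :
    √ρ * vecNorm w ≤ wnorm (ρ • 1 + Xᵀ * X) w := by
  rw [wnorm, dotProduct_smul_one_add_transpose_mul_self_mulVec, vecNorm, ← Real.sqrt_mul hρ]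
  exact Real.sqrt_le_sqrt (le_add_of_nonneg_right (dotProduct_self_nonneg _))

lemma wnorm_inv_transpose_mulVec_le (hρ : 0 < ρ) (u : Fin t → ℝ) :
    wnorm (ρ • 1 + Xᵀ * X)⁻¹ (Xᵀ *ᵥ u) ≤ vecNorm u := by
  refine wnorm_inv_le_of_forall_dotProduct_le (posDef_smul_one_add_transpose_mul_self X hρ)
    (Real.sqrt_nonneg _) fun w => ?_
  calc Xᵀ *ᵥ u ⬝ᵥ w = u ⬝ᵥ X *ᵥ w := by
        rw [dotProduct_comm, dotProduct_mulVec, vecMul_transpose, dotProduct_comm]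
    _ ≤ vecNorm u * vecNorm (X *ᵥ w) := dotProduct_le_vecNorm_mul_vecNorm _ _
    _ ≤ vecNorm u * wnorm (ρ • 1 + Xᵀ * X) w :=
      mul_le_mul_of_nonneg_left (vecNorm_mulVec_le_wnorm X hρ.le w) (Real.sqrt_nonneg _)

lemma wnorm_inv_smul_le (hρ : 0 < ρ) (θ : Fin d → ℝ) :
    wnorm (ρ • 1 + Xᵀ * X)⁻¹ (ρ • θ) ≤ √ρ * vecNorm θ := by
  refine wnorm_inv_le_of_forall_dotProduct_le (posDef_smul_one_add_transpose_mul_self X hρ)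
    (mul_nonneg (Real.sqrt_nonneg _) (Real.sqrt_nonneg _)) fun w => ?_
  calc ρ • θ ⬝ᵥ w = √ρ * (θ ⬝ᵥ w) * √ρ := by
        rw [smul_dotProduct, smul_eq_mul, mul_right_comm, Real.mul_self_sqrt hρ.le]
    _ ≤ √ρ * (vecNorm θ * vecNorm w) * √ρ := by
        gcongr; exact dotProduct_le_vecNorm_mul_vecNorm _ _
    _ = √ρ * vecNorm θ * (√ρ * vecNorm w) := by ring
    _ ≤ √ρ * vecNorm θ * wnorm (ρ • 1 + Xᵀ * X) w := by
        gcongr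
        · exact mul_nonneg (Real.sqrt_nonneg _) (Real.sqrt_nonneg _)
        · exact sqrt_mul_vecNorm_le_wnorm X hρ.le w

end Ridge

/-- confidence bound in the `Ω`-norm for ridge regression with
errors in variables. -/
theorem stmt_6 {t d : ℕ} (Xbar X : Matrix (Fin t) (Fin d) ℝ)
    (ε : Fin t → ℝ) (θstar : Fin d → ℝ) (ρ : ℝ) (hρ : 0 < ρ)
    (y : Fin t → ℝ) (hy : y = Xbar *ᵥ θstar + ε)
    (Ω : Matrix (Fin d) (Fin d) ℝ)
    (hΩ : Ω = ρ • (1 : Matrix (Fin d) (Fin d) ℝ) + Xᵀ * X)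
    (θhat : Fin d → ℝ) (hθhat : θhat = Ω⁻¹ *ᵥ (Xᵀ *ᵥ y)) :
    wnorm Ω (θhat - θstar) ≤
      wnorm Ω⁻¹ (Xᵀ *ᵥ ε) + vecNorm θstar * opNorm (X - Xbar)
        + Real.sqrt ρ * vecNorm θstar := by
  have hΩpd : Ω.PosDef := hΩ ▸ posDef_smul_one_add_transpose_mul_self X hρ
  have hdet : IsUnit Ω.det := (isUnit_iff_isUnit_det Ω).mp hΩpd.isUnit
  have hresidual : Ω *ᵥ (θhat - θstar) =
      Xᵀ *ᵥ ε - Xᵀ *ᵥ ((X - Xbar) *ᵥ θstar) - ρ • θstar := by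
    rw [mulVec_sub, hθhat, mulVec_mulVec, mul_nonsing_inv Ω hdet, one_mulVec, hy, hΩ]
    simp only [mulVec_add, sub_mulVec, add_mulVec, smul_mulVec, one_mulVec, ← mulVec_mulVec,
      mulVec_sub]
    abel
  calc wnorm Ω (θhat - θstar) = wnorm Ω⁻¹ (Ω *ᵥ (θhat - θstar)) :=
        (wnorm_inv_mulVec hdet _).symm
    _ ≤ wnorm Ω⁻¹ (Xᵀ *ᵥ ε) + wnorm Ω⁻¹ (Xᵀ *ᵥ ((X - Xbar) *ᵥ θstar))
          + wnorm Ω⁻¹ (ρ • θstar) := by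
      rw [hresidual]
      exact (wnorm_sub_le hΩpd.inv.posSemidef _ _).trans
        (add_le_add_left (wnorm_sub_le hΩpd.inv.posSemidef _ _) _)
    _ ≤ wnorm Ω⁻¹ (Xᵀ *ᵥ ε) + vecNorm θstar * opNorm (X - Xbar) + √ρ * vecNorm θstar := by
      subst hΩ
      gcongr
      · calc _ ≤ vecNorm ((X - Xbar) *ᵥ θstar) := wnorm_inv_transpose_mulVec_le X hρ _
          _ ≤ opNorm (X - Xbar) * vecNorm θstar := vecNorm_mulVec_le _ _
          _ = vecNorm θstar * opNorm (X - Xbar) := mul_comm _ _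
      · exact wnorm_inv_smul_le X hρ θstar
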